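/- Let E ⊂ ℝ^{n+1} be an n-dimensional ADR set with surface measure σ = H^n|_E, let μ be a Borel measure on E, fix x₀ ∈ E, 0 < r₀ < diam E, η ∈ (0,1), C₁ ≥ 1 and θ > 0. Suppose that for every z ∈ E such that B(z, η r₀) meets B(x₀, r₀), the weak-A∞ estimate holds at small scales: for every ball B = B(y,s) with y ∈ E and 2B ⊆ B(z, η r₀), one has μ(A) ≤ C₁ (σ(A)/σ(Δ))^θ μ(2Δ) for every Borel A ⊆ Δ := B ∩ E, where 2Δ := 2B ∩ E. Then there is C₂, depending only on n, the ADR constant, η, C₁ and θ, such that for every ball B = B(x,s) with x ∈ E and 2B ⊆ B(x₀, r₀), one has μ(A) ≤ C₂ (σ(A)/σ(Δ))^θ μ(2Δ) for every Borel A ⊆ Δ := B ∩ E; that is, μ ∈ weak-A∞(B(x₀,r₀) ∩ E). -/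

import Mathlib

open Metric MeasureTheory Set
open scoped NNReal ENNReal

noncomputable section

/-- `ℝ^{n+1}` -/
abbrev Euc (n : ℕ) : Type := EuclideanSpace ℝ (Fin (n + 1))

/-- The distance between two subsets of `ℝ^{n+1}`. -/
def sDist {n : ℕ} (A B : Set (Euc n)) : ℝ := sInf (Set.image2 dist A B)

/-- `E ⊆ ℝ^{n+1}` is an `n`-dimensional Ahlfors-David regular set with constant `C`. -/
def IsADR (n : ℕ) (E : Set (Euc n)) (C : ℝ) : Prop :=
  IsClosed E ∧ 1 ≤ C ∧ ∀ x ∈ E, ∀ r : ℝ, 0 < r → ENNReal.ofReal r < EMetric.diam E →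
    ENNReal.ofReal (C⁻¹ * r ^ n) ≤ μH[(n : ℝ)] (E ∩ ball x r) ∧
      μH[(n : ℝ)] (E ∩ ball x r) ≤ ENNReal.ofReal (C * r ^ n)

/-!
Cover `Δ = B(x, s) ∩ E` by the balls `B(t, ηs/2)` centred at a maximal `ηs/4`-separated subset
`T ⊆ Δ`. The doubled balls `B(t, ηs)` lie in `B(t, ηr₀)` and in `2B`, so the small-scale estimate
applies to each piece `A ∩ B(t, ηs/2)`; by Ahlfors–David regularity the `σ`-density of `A` in the
small surface ball exceeds that in `Δ` by at most `C₀² (2/η)ⁿ`, and the balls `B(t, ηs/8)` are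
disjoint inside `2Δ`, which bounds `#T` by `C₀² (16/η)ⁿ`. Summing over `T` gives the estimate on
`B(x₀, r₀)`.
-/

section Generic

variable {X : Type*}

theorem dist_add_le_of_ball_subset {E : Type*} [NormedAddCommGroup E] [NormedSpace ℝ E]
    [Nontrivial E] {x y : E} {a b : ℝ} (ha : 0 < a) (h : ball x a ⊆ ball y b) :
    dist x y + a ≤ b := by
  obtain ⟨w, hw, hxy⟩ : ∃ w : E, ‖w‖ = 1 ∧ x - y = ‖x - y‖ • w := by
    rcases eq_or_ne (x - y) 0 with h0 | h0
    · obtain ⟨w, hw⟩ := exists_norm_eq E zero_le_one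
      exact ⟨w, hw, by simp [h0]⟩
    · exact ⟨NormedSpace.normalize (x - y), NormedSpace.norm_normalize_eq_one_iff.2 h0,
        (NormedSpace.norm_smul_normalize _).symm⟩
  have key : ∀ τ, 0 ≤ τ → τ < a → dist x y + τ < b := by
    intro τ hτ hτa
    have hmem := h (show x + τ • w ∈ ball x a by
      simpa [norm_smul, hw, abs_of_nonneg hτ] using hτa)
    have hnorm : x + τ • w - y = (‖x - y‖ + τ) • w := by
      rw [add_smul, ← hxy]; abel
    rwa [mem_ball, dist_eq_norm, hnorm, norm_smul, hw, mul_one, Real.norm_eq_abs,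
      abs_of_nonneg (by positivity), ← dist_eq_norm] at hmem
  by_contra! hba
  have hd : dist x y < b := by simpa using key 0 le_rfl ha
  linarith [key (b - dist x y) (by linarith) (by linarith)]

theorem Metric.IsSeparated.pairwiseDisjoint_ball [PseudoMetricSpace X] {ε : ℝ≥0} {S : Set X}
    (h : IsSeparated ε S) : S.PairwiseDisjoint fun t => ball t (ε / 2) := by
  intro a ha b hb hab
  rw [Function.onFun, disjoint_left]
  intro p hpa hpb
  have hab' : (ε : ℝ) < dist a b := by
    have : (ε : ℝ≥0∞) < edist a b := h ha hb hab
    rw [edist_nndist, ENNReal.coe_lt_coe, ← NNReal.coe_lt_coe, coe_nndist] at this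
    exact this
  linarith [dist_triangle_left a b p, mem_ball.1 hpa, mem_ball.1 hpb]

theorem Metric.packingNumber_ne_top_of_totallyBounded [PseudoEMetricSpace X] {A : Set X}
    {ε : ℝ≥0} (hA : TotallyBounded A) (hε : ε ≠ 0) : packingNumber ε A ≠ ⊤ := by
  obtain ⟨N, -, hNfin, hN⟩ :=
    exists_finite_isCover_of_totallyBounded (ε := ε / 2) (by simpa using hε) hA
  refine ne_top_of_le_ne_top hNfin.encard_lt_top.ne ?_
  calc packingNumber ε A = packingNumber (2 * (ε / 2)) A := by rw [mul_div_cancel₀ _ two_ne_zero]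
    _ ≤ externalCoveringNumber (ε / 2) A := packingNumber_two_mul_le_externalCoveringNumber _ _
    _ ≤ N.encard := hN.externalCoveringNumber_le_encard

theorem Metric.exists_finset_isSeparated_isCover [PseudoEMetricSpace X] {A : Set X} {ε : ℝ≥0}
    (hA : TotallyBounded A) (hε : ε ≠ 0) :
    ∃ T : Finset X, ↑T ⊆ A ∧ IsSeparated ε (T : Set X) ∧ IsCover ε A T := by
  have hpack := packingNumber_ne_top_of_totallyBounded hA hε
  have hfin : (maximalSeparatedSet ε A).Finite :=
    encard_ne_top_iff.1 (by rwa [encard_maximalSeparatedSet hpack])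
  exact ⟨hfin.toFinset, by simpa using maximalSeparatedSet_subset,
    by simpa using isSeparated_maximalSeparatedSet,
    by simpa using isCover_maximalSeparatedSet hpack⟩

theorem ENNReal.div_le_mul_div_of_le_mul {a b c K : ℝ≥0∞} (hb0 : b ≠ 0) (hbtop : b ≠ ⊤)
    (h : b ≤ K * c) : a / c ≤ K * (a / b) := by
  have hinv : c⁻¹ ≤ K / b := by
    rw [ENNReal.le_div_iff_mul_le (Or.inl hb0) (Or.inl hbtop), mul_comm, ← div_eq_mul_inv]
    exact ENNReal.div_le_of_le_mul h
  calc a / c = a * c⁻¹ := div_eq_mul_inv a c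
    _ ≤ a * (K / b) := by gcongr
    _ = K * (a / b) := by simp only [div_eq_mul_inv]; ring

end Generic

namespace MeasureTheory

variable {X ι : Type*} [MeasurableSpace X] {μ : Measure X}

theorem card_mul_le_measure_of_pairwiseDisjoint {T : Finset ι} {s : ι → Set X} {S : Set X}
    {m : ℝ≥0∞} (hd : (T : Set ι).PairwiseDisjoint s) (hs : ∀ i ∈ T, MeasurableSet (s i))
    (hS : ∀ i ∈ T, s i ⊆ S) (hm : ∀ i ∈ T, m ≤ μ (s i)) : T.card * m ≤ μ S :=
  calc T.card * m ≤ ∑ i ∈ T, μ (s i) := by simpa using Finset.card_nsmul_le_sum T _ m hm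
    _ = μ (⋃ i ∈ T, s i) := (measure_biUnion_finset hd hs).symm
    _ ≤ μ S := measure_mono (iUnion₂_subset hS)

theorem measure_le_card_mul_of_subset_biUnion {A : Set X} {T : Finset ι} {U : ι → Set X}
    {c : ℝ≥0∞} (hA : A ⊆ ⋃ i ∈ T, U i) (hc : ∀ i ∈ T, μ (A ∩ U i) ≤ c) : μ A ≤ T.card * c :=
  calc μ A ≤ μ (⋃ i ∈ T, A ∩ U i) := by
        rw [← inter_iUnion₂]; exact measure_mono (subset_inter subset_rfl hA)
    _ ≤ ∑ i ∈ T, μ (A ∩ U i) := measure_biUnion_finset_le T _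
    _ ≤ T.card * c := by simpa using Finset.sum_le_card_nsmul T _ c hc

end MeasureTheory

/-- `μ ∈ weak-A_∞(B₀ ∩ E)` with constants `(C, θ)`, where `σ` plays the surface measure. -/
def WeakAInfty {X : Type*} [PseudoMetricSpace X] [MeasurableSpace X] (σ μ : Measure X)
    (E B₀ : Set X) (C θ : ℝ) : Prop :=
  ∀ y ∈ E, ∀ s : ℝ, ball y (2 * s) ⊆ B₀ → ∀ A : Set X, MeasurableSet A → A ⊆ ball y s ∩ E →
    μ A ≤ ENNReal.ofReal C * (σ A / σ (ball y s ∩ E)) ^ θ * μ (ball y (2 * s) ∩ E)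

theorem WeakAInfty.measure_inter_ball_le {X : Type*} [PseudoMetricSpace X] [MeasurableSpace X]
    [OpensMeasurableSpace X] {σ μ : Measure X} {E B₀ A : Set X} {C θ : ℝ} {K : ℝ≥0∞}
    {x t : X} {s ρ : ℝ} (h : WeakAInfty σ μ E B₀ C θ) (hθ : 0 ≤ θ) (ht : t ∈ E)
    (htB₀ : ball t (2 * ρ) ⊆ B₀) (htx : ball t (2 * ρ) ⊆ ball x (2 * s))
    (hΔ0 : σ (ball x s ∩ E) ≠ 0) (hΔtop : σ (ball x s ∩ E) ≠ ⊤)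
    (hK : σ (ball x s ∩ E) ≤ K * σ (ball t ρ ∩ E)) (hA : MeasurableSet A) (hAE : A ⊆ E) :
    μ (A ∩ ball t ρ) ≤
      ENNReal.ofReal C * (K * (σ A / σ (ball x s ∩ E))) ^ θ * μ (ball x (2 * s) ∩ E) :=
  calc μ (A ∩ ball t ρ)
      ≤ ENNReal.ofReal C * (σ (A ∩ ball t ρ) / σ (ball t ρ ∩ E)) ^ θ *
          μ (ball t (2 * ρ) ∩ E) :=
        h t ht ρ htB₀ _ (hA.inter measurableSet_ball) fun p hp => ⟨hp.2, hAE hp.1⟩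
    _ ≤ _ := by
        gcongr
        exact (ENNReal.div_le_div_right (measure_mono inter_subset_left) _).trans
          (ENNReal.div_le_mul_div_of_le_mul hΔ0 hΔtop hK)

namespace IsADR

variable {n : ℕ} {E : Set (Euc n)} {C : ℝ} {x t : Euc n} {r s ρ : ℝ}

theorem ofReal_le_measure_ball (hE : IsADR n E C) (hx : x ∈ E) (hr : 0 < r)
    (hrE : ENNReal.ofReal r < ediam E) :
    ENNReal.ofReal (C⁻¹ * r ^ n) ≤ μH[(n : ℝ)] (ball x r ∩ E) := by
  rw [inter_comm]; exact (hE.2.2 x hx r hr hrE).1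

theorem measure_ball_le (hE : IsADR n E C) (hx : x ∈ E) (hr : 0 < r)
    (hrE : ENNReal.ofReal r < ediam E) :
    μH[(n : ℝ)] (ball x r ∩ E) ≤ ENNReal.ofReal (C * r ^ n) := by
  rw [inter_comm]; exact (hE.2.2 x hx r hr hrE).2

theorem measure_ball_le_mul_measure_ball (hE : IsADR n E C) (hx : x ∈ E) (ht : t ∈ E)
    (hρ : 0 < ρ) (hρs : ρ ≤ s) (hsE : ENNReal.ofReal s < ediam E) :
    μH[(n : ℝ)] (ball x s ∩ E) ≤
      ENNReal.ofReal (C ^ 2 * (s / ρ) ^ n) * μH[(n : ℝ)] (ball t ρ ∩ E) := by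
  have hC : 0 < C := zero_lt_one.trans_le hE.2.1
  have hs : 0 < s := hρ.trans_le hρs
  calc μH[(n : ℝ)] (ball x s ∩ E) ≤ ENNReal.ofReal (C * s ^ n) := hE.measure_ball_le hx hs hsE
    _ = ENNReal.ofReal (C ^ 2 * (s / ρ) ^ n) * ENNReal.ofReal (C⁻¹ * ρ ^ n) := by
        rw [← ENNReal.ofReal_mul (by positivity), div_pow]
        congr 1
        field_simp
    _ ≤ _ := by
        gcongr
        exact hE.ofReal_le_measure_ball ht hρ ((ENNReal.ofReal_le_ofReal hρs).trans_lt hsE)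

theorem card_le_of_isSeparated (hE : IsADR n E C) (hx : x ∈ E) {ε : ℝ≥0} (hε : 0 < ε)
    (hεs : (ε : ℝ) ≤ 2 * s) (hsE : ENNReal.ofReal (2 * s) < ediam E) {T : Finset (Euc n)}
    (hT : ↑T ⊆ ball x s ∩ E) (hsep : IsSeparated ε (T : Set (Euc n))) :
    (T.card : ℝ) ≤ C ^ 2 * (4 * s / ε) ^ n := by
  have hC : 0 < C := zero_lt_one.trans_le hE.2.1
  have hε' : (0 : ℝ) < ε := hε
  have hs : 0 < s := by linarith
  have hpack : (T.card : ℝ≥0∞) * ENNReal.ofReal (C⁻¹ * (ε / 2) ^ n) ≤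
      ENNReal.ofReal (C * (2 * s) ^ n) := by
    refine (card_mul_le_measure_of_pairwiseDisjoint
      (hsep.pairwiseDisjoint_ball.mono fun t => inter_subset_left (t := E))
      (fun t _ => measurableSet_ball.inter hE.1.measurableSet) (S := ball x (2 * s) ∩ E)
      ?_ ?_).trans (hE.measure_ball_le hx (by linarith) hsE)
    · intro t ht
      refine inter_subset_inter_left E (ball_subset_ball' ?_)
      linarith [mem_ball.1 (hT ht).1]
    · intro t ht
      exact hE.ofReal_le_measure_ball (hT ht).2 (by positivity)
        ((ENNReal.ofReal_le_ofReal (by linarith)).trans_lt hsE)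
  rw [← ENNReal.ofReal_natCast, ← ENNReal.ofReal_mul (Nat.cast_nonneg _),
    ENNReal.ofReal_le_ofReal_iff (by positivity), ← le_div_iff₀ (by positivity)] at hpack
  refine hpack.trans_eq ?_
  rw [div_pow, div_pow, mul_pow, mul_pow, show (4 : ℝ) = 2 * 2 by norm_num, mul_pow]
  field_simp

theorem measure_ball_ne_zero (hE : IsADR n E C) (hx : x ∈ E) (hs : 0 < s)
    (hsE : ENNReal.ofReal s < ediam E) : μH[(n : ℝ)] (ball x s ∩ E) ≠ 0 := by
  have hC : 0 < C := zero_lt_one.trans_le hE.2.1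
  exact (ENNReal.ofReal_pos.2 (by positivity)).trans_le (hE.ofReal_le_measure_ball hx hs hsE)
    |>.ne'

theorem measure_ball_ne_top (hE : IsADR n E C) (hx : x ∈ E) (hs : 0 < s)
    (hsE : ENNReal.ofReal s < ediam E) : μH[(n : ℝ)] (ball x s ∩ E) ≠ ⊤ :=
  ne_top_of_le_ne_top ENNReal.ofReal_ne_top (hE.measure_ball_le hx hs hsE)

theorem exists_finset_cover_ball {η : ℝ} (hE : IsADR n E C) (hx : x ∈ E) (hs : 0 < s)
    (hη0 : 0 < η) (hη1 : η ≤ 1) (hsE : ENNReal.ofReal (2 * s) < ediam E) :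
    ∃ T : Finset (Euc n), ↑T ⊆ ball x s ∩ E ∧ (T.card : ℝ) ≤ C ^ 2 * (16 / η) ^ n ∧
      ball x s ∩ E ⊆ ⋃ t ∈ T, ball t (η * s / 2) := by
  obtain ⟨ε, hε⟩ : ∃ ε : ℝ≥0, (ε : ℝ) = η * s / 4 := ⟨⟨η * s / 4, by positivity⟩, rfl⟩
  have hε0 : 0 < ε := by rw [← NNReal.coe_pos, hε]; positivity
  obtain ⟨T, hTΔ, hTsep, hTcov⟩ := exists_finset_isSeparated_isCover (ε := ε)
    ((isCompact_closedBall x s).totallyBounded.subset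
      (inter_subset_left.trans ball_subset_closedBall)) hε0.ne'
  have hcard : (T.card : ℝ) ≤ C ^ 2 * (16 / η) ^ n := by
    refine (hE.card_le_of_isSeparated hx hε0 (by nlinarith) hsE hTΔ hTsep).trans_eq ?_
    rw [hε]; field_simp; norm_num
  refine ⟨T, hTΔ, hcard, hTcov.subset_iUnion_closedBall.trans ?_⟩
  exact iUnion₂_mono fun t _ => closedBall_subset_ball (by rw [hε]; linarith)

theorem weakAInfty_ball_of_forall_weakAInfty {μ : Measure (Euc n)} {x₀ : Euc n} {r₀ η C₁ θ : ℝ}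
    (hE : IsADR n E C) (hη0 : 0 < η) (hη1 : η ≤ 1) (hθ : 0 ≤ θ)
    (hr₀E : ENNReal.ofReal r₀ < ediam E)
    (hloc : ∀ z ∈ ball x₀ r₀ ∩ E, WeakAInfty μH[(n : ℝ)] μ E (ball z (η * r₀)) C₁ θ) :
    WeakAInfty μH[(n : ℝ)] μ E (ball x₀ r₀)
      (C ^ 2 * (16 / η) ^ n * (C ^ 2 * (2 / η) ^ n) ^ θ * C₁) θ := by
  intro x hx s hxs A hA hAΔ
  rcases le_or_gt s 0 with hs | hs
  · rw [ball_eq_empty.2 hs, empty_inter, subset_empty_iff] at hAΔ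
    simp [hAΔ]
  have h2s : 2 * s ≤ r₀ := by
    linarith [dist_add_le_of_ball_subset (by positivity) hxs, dist_nonneg (x := x) (y := x₀)]
  have hE' : ∀ r ≤ r₀, ENNReal.ofReal r < ediam E :=
    fun r hr => (ENNReal.ofReal_le_ofReal hr).trans_lt hr₀E
  have hsE : ENNReal.ofReal s < ediam E := hE' s (by linarith)
  obtain ⟨T, hTΔ, hcard, hcov⟩ := hE.exists_finset_cover_ball hx hs hη0 hη1 (hE' _ h2s)
  have hpiece : ∀ t ∈ T, μ (A ∩ ball t (η * s / 2)) ≤ ENNReal.ofReal C₁ *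
      (ENNReal.ofReal (C ^ 2 * (2 / η) ^ n) * (μH[(n : ℝ)] A / μH[(n : ℝ)] (ball x s ∩ E))) ^ θ *
      μ (ball x (2 * s) ∩ E) := by
    intro t ht
    obtain ⟨htx, htE⟩ := hTΔ ht
    have hK := hE.measure_ball_le_mul_measure_ball (ρ := η * s / 2) hx htE (by positivity)
      (by nlinarith) hsE
    rw [show s / (η * s / 2) = 2 / η by field_simp] at hK
    exact (hloc t ⟨hxs (ball_subset_ball (by linarith) htx), htE⟩).measure_inter_ball_le hθ htE
      (ball_subset_ball (by nlinarith)) (ball_subset_ball' (by nlinarith [mem_ball.1 htx]))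
      (hE.measure_ball_ne_zero hx hs hsE) (hE.measure_ball_ne_top hx hs hsE) hK hA
      fun p hp => (hAΔ hp).2
  calc μ A ≤ T.card * _ := measure_le_card_mul_of_subset_biUnion (hAΔ.trans hcov) hpiece
    _ ≤ ENNReal.ofReal (C ^ 2 * (16 / η) ^ n) * _ := by
        gcongr
        rw [← ENNReal.ofReal_natCast]; exact ENNReal.ofReal_le_ofReal hcard
    _ = _ := by
        rw [ENNReal.mul_rpow_of_nonneg _ _ hθ, ENNReal.ofReal_rpow_of_nonneg (by positivity) hθ,
          ENNReal.ofReal_mul (p := C ^ 2 * (16 / η) ^ n * _) (by positivity),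
          ENNReal.ofReal_mul (p := C ^ 2 * (16 / η) ^ n) (by positivity)]
        ring

end IsADR

theorem weak_Ainfty_patching_general
    (n : ℕ) (C₀ η C₁ θ : ℝ) (hC₀ : 1 ≤ C₀) (hη0 : 0 < η) (hη1 : η < 1)
    (hC₁ : 1 ≤ C₁) (hθ : 0 < θ) :
    ∃ C₂ : ℝ, 0 < C₂ ∧
      ∀ E : Set (Euc n), IsADR n E C₀ →
      ∀ (μ : Measure (Euc n)) (x₀ : Euc n) (r₀ : ℝ), x₀ ∈ E → 0 < r₀ →
        ENNReal.ofReal r₀ < EMetric.diam E →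
        (∀ z ∈ E, (ball z (η * r₀) ∩ ball x₀ r₀).Nonempty →
          ∀ y ∈ E, ∀ s : ℝ, ball y (2 * s) ⊆ ball z (η * r₀) →
            ∀ A : Set (Euc n), MeasurableSet A → A ⊆ ball y s ∩ E →
              μ A ≤ ENNReal.ofReal C₁ *
                (μH[(n : ℝ)] A / μH[(n : ℝ)] (ball y s ∩ E)) ^ θ *
                μ (ball y (2 * s) ∩ E)) →
        ∀ x ∈ E, ∀ s : ℝ, ball x (2 * s) ⊆ ball x₀ r₀ →
          ∀ A : Set (Euc n), MeasurableSet A → A ⊆ ball x s ∩ E →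
            μ A ≤ ENNReal.ofReal C₂ *
              (μH[(n : ℝ)] A / μH[(n : ℝ)] (ball x s ∩ E)) ^ θ *
              μ (ball x (2 * s) ∩ E) := by
  refine ⟨C₀ ^ 2 * (16 / η) ^ n * (C₀ ^ 2 * (2 / η) ^ n) ^ θ * C₁, by positivity, ?_⟩
  intro E hE μ x₀ r₀ _ hr₀ hr₀E hsmall
  exact hE.weakAInfty_ball_of_forall_weakAInfty hη0 hη1.le hθ.le hr₀E
    fun z hz => hsmall z hz.2 ⟨z, mem_ball_self (by positivity), hz.1⟩

/-- **Patching small-scale weak-`A_∞` to a full surface ball.** Let `E` be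
`n`-dimensional ADR with surface measure `σ = Hⁿ|_E`, `μ` a Borel measure on `E`,
`x₀ ∈ E`, `0 < r₀ < diam E`, `η ∈ (0,1)`, `C₁ ≥ 1`, `θ > 0`. If for every `z ∈ E`
with `B(z, η r₀)` meeting `B(x₀, r₀)` the weak-`A_∞` estimate with constants
`(C₁, θ)` holds for all surface balls `Δ = B ∩ E` with `2B ⊆ B(z, η r₀)`, then
there is `C₂ = C₂(n, ADR, η, C₁, θ)` such that the weak-`A_∞` estimate with
constants `(C₂, θ)` holds for all surface balls `Δ = B ∩ E` with `2B ⊆ B(x₀, r₀)`;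
that is, `μ ∈ weak-A_∞(B(x₀, r₀) ∩ E)`. -/
theorem weak_Ainfty_patching
    (n : ℕ) (hn : 1 ≤ n) (C₀ η C₁ θ : ℝ) (hC₀ : 1 ≤ C₀) (hη0 : 0 < η) (hη1 : η < 1)
    (hC₁ : 1 ≤ C₁) (hθ : 0 < θ) :
    ∃ C₂ : ℝ, 0 < C₂ ∧
      ∀ E : Set (Euc n), IsADR n E C₀ →
      ∀ (μ : Measure (Euc n)) (x₀ : Euc n) (r₀ : ℝ), x₀ ∈ E → 0 < r₀ →
        ENNReal.ofReal r₀ < EMetric.diam E →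
        (∀ z ∈ E, (ball z (η * r₀) ∩ ball x₀ r₀).Nonempty →
          ∀ y ∈ E, ∀ s : ℝ, ball y (2 * s) ⊆ ball z (η * r₀) →
            ∀ A : Set (Euc n), MeasurableSet A → A ⊆ ball y s ∩ E →
              μ A ≤ ENNReal.ofReal C₁ *
                (μH[(n : ℝ)] A / μH[(n : ℝ)] (ball y s ∩ E)) ^ θ *
                μ (ball y (2 * s) ∩ E)) →
        ∀ x ∈ E, ∀ s : ℝ, ball x (2 * s) ⊆ ball x₀ r₀ →
          ∀ A : Set (Euc n), MeasurableSet A → A ⊆ ball x s ∩ E →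
            μ A ≤ ENNReal.ofReal C₂ *
              (μH[(n : ℝ)] A / μH[(n : ℝ)] (ball x s ∩ E)) ^ θ *
              μ (ball x (2 * s) ∩ E) :=
  weak_Ainfty_patching_general n C₀ η C₁ θ hC₀ hη0 hη1 hC₁ hθ
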